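/- arXiv:1203.2017 — 2 statements merged into one kernel-verified Lean document; each statement's English description precedes it below -/
import Mathlib

section
/- Let (Ω, 𝓕, P*) be a probability space, 𝓖 ⊆ 𝓕 a sub-σ-algebra, and d ∈ ℕ with d ≥ 1. Let ε : Ω → ℝ^d be a standard Gaussian vector independent of 𝓖 under P*. Let α : Ω → ℝ and v : Ω → ℝ^d be 𝓖-measurable with v bounded, and let p₀, q₀, b : Ω → ℝ be strictly positive 𝓖-measurable random variables (representing the previous-period bond prices P(t−Δ,t), P(t−Δ,t+m) and the bank account B_{t−Δ}). Define the new bank account B := b / p₀ and the new bond price Q := (q₀ / p₀) · exp(−α − ⟨v, ε⟩). If the no-arbitrage (martingale) condition E*[B^{-1} Q | 𝓖] = b^{-1} q₀ holds almost surely, then almost surely α = log E*[exp(−⟨v, ε⟩) | 𝓖] = ‖v‖²/2. -/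
open MeasureTheory ProbabilityTheory Real

/-!
Write `B⁻¹ Q = G · exp (-⟨v, ε⟩)` with `G = (q₀ / b) · exp (-α)` measurable with respect to `𝓖`.
Pulling `G` out of the conditional expectation reduces the no-arbitrage condition to the
conditional moment generating function of `ε` given `𝓖`. Since `ε` is independent of `𝓖` and `v`
is `𝓖`-measurable, `v` may be frozen: `E[exp (-⟨v, ε⟩) | 𝓖] = exp (‖v‖² / 2)`, the Gaussian moment
generating function evaluated at `-v`. Hence `(q₀ / b) · exp (‖v‖² / 2 - α) = q₀ / b`.
-/

section GaussianPi

variable {ι : Type*} [Fintype ι] (μ : ι → ℝ) (v : ι → NNReal)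

lemma integrable_exp_mul_sum_abs_pi_gaussianReal (c : ℝ) :
    Integrable (fun x : ι → ℝ => exp (c * ∑ i, |x i|))
      (Measure.pi fun i => gaussianReal (μ i) (v i)) := by
  simp_rw [Finset.mul_sum, exp_sum]
  exact Integrable.fintype_prod fun i => integrable_exp_mul_abs (X := fun x => x)
    (integrable_exp_mul_gaussianReal c) (integrable_exp_mul_gaussianReal (-c))

lemma integral_exp_sum_mul_pi_gaussianReal (t : ι → ℝ) :
    ∫ x, exp (∑ i, t i * x i) ∂(Measure.pi fun i => gaussianReal (μ i) (v i))
      = exp (∑ i, (μ i * t i + v i * t i ^ 2 / 2)) := by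
  simp_rw [exp_sum]
  rw [integral_fintype_prod_eq_prod (fun i x => exp (t i * x))]
  exact Finset.prod_congr rfl fun i _ => congrFun mgf_id_gaussianReal (t i)

end GaussianPi

section Freezing

variable {Ω E F G : Type*} {𝓖 mΩ : MeasurableSpace Ω} [MeasurableSpace E] [MeasurableSpace F]
  {P : Measure Ω} {X : Ω → E} {Y : Ω → F}

lemma indepFun_of_indep_of_measurable (hX : Measurable[𝓖] X)
    (hindep : Indep (MeasurableSpace.comap Y inferInstance) 𝓖 P) : IndepFun X Y P :=
  (IndepFun_iff_Indep X Y P).mpr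
    (indep_of_indep_of_le_left hindep.symm (measurable_iff_comap_le.mp hX))

variable [IsFiniteMeasure P] [NormedAddCommGroup G] {f : E × F → G}

lemma integrable_prod_map_of_indepFun (hX : Measurable X) (hY : Measurable Y) (hXY : IndepFun X Y P)
    (hf : StronglyMeasurable f) (hint : Integrable (fun ω => f (X ω, Y ω)) P) :
    Integrable f ((P.map X).prod (P.map Y)) := by
  rw [← hXY.map_prod_eq_prod_map_map hX.aemeasurable hY.aemeasurable]
  exact (integrable_map_measure hf.aestronglyMeasurable (hX.prodMk hY).aemeasurable).mpr hint

variable [NormedSpace ℝ G]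

lemma integrable_integral_comp_prodMk_of_indepFun (hX : Measurable X) (hY : Measurable Y)
    (hXY : IndepFun X Y P) (hf : StronglyMeasurable f)
    (hint : Integrable (fun ω => f (X ω, Y ω)) P) :
    Integrable (fun ω => ∫ y, f (X ω, y) ∂(P.map Y)) P :=
  (integrable_map_measure hf.integral_prod_right'.aestronglyMeasurable hX.aemeasurable).mp
    (integrable_prod_map_of_indepFun hX hY hXY hf hint).integral_prod_left

lemma integral_comp_prodMk_of_indepFun (hX : Measurable X) (hY : Measurable Y)
    (hXY : IndepFun X Y P) (hf : StronglyMeasurable f)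
    (hint : Integrable (fun ω => f (X ω, Y ω)) P) :
    ∫ ω, f (X ω, Y ω) ∂P = ∫ ω, ∫ y, f (X ω, y) ∂(P.map Y) ∂P := by
  rw [← integral_map (hX.prodMk hY).aemeasurable hf.aestronglyMeasurable,
    hXY.map_prod_eq_prod_map_map hX.aemeasurable hY.aemeasurable,
    integral_prod f (integrable_prod_map_of_indepFun hX hY hXY hf hint),
    integral_map hX.aemeasurable hf.integral_prod_right'.aestronglyMeasurable]

theorem condExp_comp_prodMk_ae_eq_integral_of_indep [CompleteSpace G] (h𝓖 : 𝓖 ≤ mΩ)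
    (hX : Measurable[𝓖] X) (hY : Measurable Y)
    (hindep : Indep (MeasurableSpace.comap Y inferInstance) 𝓖 P) (hf : StronglyMeasurable f)
    (hint : Integrable (fun ω => f (X ω, Y ω)) P) :
    P[fun ω => f (X ω, Y ω) | 𝓖] =ᵐ[P] fun ω => ∫ y, f (X ω, y) ∂(P.map Y) := by
  have hg : StronglyMeasurable[𝓖] fun ω => ∫ y, f (X ω, y) ∂(P.map Y) :=
    hf.integral_prod_right'.comp_measurable hX
  refine (ae_eq_condExp_of_forall_setIntegral_eq h𝓖 hint (fun s _ _ => ?_) (fun s hs _ => ?_)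
    hg.aestronglyMeasurable).symm
  · exact (integrable_integral_comp_prodMk_of_indepFun (hX.mono h𝓖 le_rfl) hY
      (indepFun_of_indep_of_measurable hX hindep) hf hint).integrableOn
  -- Test against `s` by freezing the pair `(𝟙_s, X)` instead of `X`.
  set W : Ω → ℝ × E := fun ω => (s.indicator 1 ω, X ω)
  have hW : Measurable[𝓖] W := (measurable_const.indicator hs).prodMk hX
  have hφ : StronglyMeasurable fun p : (ℝ × E) × F => p.1.1 • f (p.1.2, p.2) :=
    (measurable_fst.comp measurable_fst).stronglyMeasurable.smul
      (hf.comp_measurable ((measurable_snd.comp measurable_fst).prodMk measurable_snd))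
  have hφW (ω : Ω) (y : F) : (W ω).1 • f ((W ω).2, y) = s.indicator (fun ω => f (X ω, y)) ω := by
    by_cases hω : ω ∈ s <;> simp [W, hω]
  have hsΩ : MeasurableSet s := h𝓖 s hs
  calc ∫ ω in s, ∫ y, f (X ω, y) ∂(P.map Y) ∂P
      = ∫ ω, ∫ y, (W ω).1 • f ((W ω).2, y) ∂(P.map Y) ∂P := by
        rw [← integral_indicator hsΩ]
        refine integral_congr_ae (ae_of_all _ fun ω => ?_)
        by_cases hω : ω ∈ s <;> simp [W, hω]
    _ = ∫ ω, (W ω).1 • f ((W ω).2, Y ω) ∂P := by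
        refine (integral_comp_prodMk_of_indepFun (hW.mono h𝓖 le_rfl) hY
          (indepFun_of_indep_of_measurable hW hindep) hφ ?_).symm
        simp_rw [hφW]
        exact hint.indicator hsΩ
    _ = ∫ ω in s, f (X ω, Y ω) ∂P := by
        rw [← integral_indicator hsΩ]
        exact integral_congr_ae (ae_of_all _ fun ω => hφW ω (Y ω))

end Freezing

section GaussianVector

variable {ι Ω : Type*} [Fintype ι] {𝓖 mΩ : MeasurableSpace Ω} {P : Measure Ω} {ε v : Ω → ι → ℝ}

lemma neg_sum_mul_le_mul_sum_abs {a b : ι → ℝ} {C : ℝ} (h : ∀ i, |a i| ≤ C) :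
    -∑ i, a i * b i ≤ C * ∑ i, |b i| := by
  rw [← Finset.sum_neg_distrib, Finset.mul_sum]
  exact Finset.sum_le_sum fun i _ => (neg_le_abs _).trans
    ((abs_mul _ _).trans_le (mul_le_mul_of_nonneg_right (h i) (abs_nonneg _)))

lemma integrable_exp_neg_sum_mul (hε : Measurable ε)
    (hε_law : P.map ε = Measure.pi fun _ => gaussianReal 0 1) (hv : Measurable v) {C : ℝ}
    (hv_bd : ∀ ω i, |v ω i| ≤ C) :
    Integrable (fun ω => exp (-∑ i, v ω i * ε ω i)) P := by
  have hdom : Integrable (fun ω => exp (C * ∑ i, |ε ω i|)) P := by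
    have h := integrable_exp_mul_sum_abs_pi_gaussianReal (fun _ : ι => 0) (fun _ => 1) C
    rw [← hε_law] at h
    exact (integrable_map_measure (Continuous.aestronglyMeasurable (by fun_prop))
      hε.aemeasurable).mp h
  refine hdom.mono' (by fun_prop) (ae_of_all _ fun ω => ?_)
  rw [norm_of_nonneg (exp_pos _).le, exp_le_exp]
  exact neg_sum_mul_le_mul_sum_abs (hv_bd ω)

theorem condExp_exp_neg_sum_mul_ae_eq [IsFiniteMeasure P] (h𝓖 : 𝓖 ≤ mΩ) (hε : Measurable ε)
    (hε_law : P.map ε = Measure.pi fun _ => gaussianReal 0 1)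
    (hε_indep : Indep (MeasurableSpace.comap ε inferInstance) 𝓖 P) (hv : Measurable[𝓖] v)
    {C : ℝ} (hv_bd : ∀ ω i, |v ω i| ≤ C) :
    P[fun ω => exp (-∑ i, v ω i * ε ω i) | 𝓖] =ᵐ[P] fun ω => exp ((∑ i, v ω i ^ 2) / 2) := by
  refine (condExp_comp_prodMk_ae_eq_integral_of_indep h𝓖 hv hε hε_indep
    (f := fun p : (ι → ℝ) × (ι → ℝ) => exp (-∑ i, p.1 i * p.2 i))
    (Measurable.stronglyMeasurable (by fun_prop))
    (integrable_exp_neg_sum_mul hε hε_law (hv.mono h𝓖 le_rfl) hv_bd)).trans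
    (ae_of_all _ fun ω => ?_)
  have h := integral_exp_sum_mul_pi_gaussianReal (fun _ : ι => 0) (fun _ => 1) (-v ω)
  simp only [Pi.neg_apply, neg_mul, Finset.sum_neg_distrib, zero_mul, zero_add, NNReal.coe_one,
    one_mul, neg_sq] at h
  dsimp only
  rw [hε_law, h, Finset.sum_div]

lemma eq_of_mul_exp_neg_mul_exp_eq_self {c a s : ℝ} (hc : c ≠ 0)
    (h : c * exp (-a) * exp s = c) : a = s := by
  have h1 : exp (s - a) = 1 := by
    refine mul_left_cancel₀ hc ?_
    rw [sub_eq_add_neg, exp_add]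
    linear_combination h
  linarith [exp_eq_one_iff _ |>.mp h1]

end GaussianVector

theorem consistent_yield_hjm_no_arbitrage_drift_general
    {Ω : Type*} {mΩ : MeasurableSpace Ω} (P : Measure Ω) [IsProbabilityMeasure P]
    (𝓖 : MeasurableSpace Ω) (h𝓖 : 𝓖 ≤ mΩ)
    (d : ℕ)
    (ε : Ω → (Fin d → ℝ)) (hε_meas : Measurable[mΩ] ε)
    (hε_law : @Measure.map Ω (Fin d → ℝ) mΩ _ ε P
      = Measure.pi (fun _ : Fin d => gaussianReal 0 1))
    (hε_indep : Indep (MeasurableSpace.comap ε inferInstance) 𝓖 P)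
    (α : Ω → ℝ) (hα_meas : Measurable[𝓖] α)
    (v : Ω → (Fin d → ℝ)) (hv_meas : Measurable[𝓖] v)
    (Cv : ℝ) (hv_bd : ∀ ω i, |v ω i| ≤ Cv)
    (p₀ q₀ b : Ω → ℝ)
    (hq₀_meas : Measurable[𝓖] q₀) (hb_meas : Measurable[𝓖] b)
    (hp₀_pos : ∀ ω, 0 < p₀ ω) (hq₀_pos : ∀ ω, 0 < q₀ ω) (hb_pos : ∀ ω, 0 < b ω)
    (B Q : Ω → ℝ)
    (hB : ∀ ω, B ω = b ω / p₀ ω)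
    (hQ : ∀ ω, Q ω = (q₀ ω / p₀ ω) * Real.exp (-(α ω) - ∑ i, v ω i * ε ω i))
    (h_na : (P[fun ω => (B ω)⁻¹ * Q ω | 𝓖]) =ᵐ[P] fun ω => (b ω)⁻¹ * q₀ ω) :
    ∀ᵐ ω ∂P,
      α ω = Real.log ((P[fun ω' => Real.exp (-(∑ i, v ω' i * ε ω' i)) | 𝓖]) ω)
      ∧ α ω = (∑ i, (v ω i) ^ 2) / 2 := by
  set g : Ω → ℝ := fun ω => exp (-∑ i, v ω i * ε ω i)
  set G : Ω → ℝ := fun ω => q₀ ω / b ω * exp (-α ω)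
  have hG : Measurable[𝓖] G := by fun_prop
  have hg : Integrable g P :=
    integrable_exp_neg_sum_mul hε_meas hε_law (hv_meas.mono h𝓖 le_rfl) hv_bd
  have hBQ : (fun ω => (B ω)⁻¹ * Q ω) = G * g := by
    funext ω
    have hp₀ : p₀ ω ≠ 0 := (hp₀_pos ω).ne'
    simp only [hB, hQ, G, g, Pi.mul_apply, sub_eq_add_neg, exp_add]
    field_simp
  rw [hBQ] at h_na
  -- Otherwise the conditional expectation would be `0`, while `b⁻¹ q₀ > 0`.
  have hGg : Integrable (G * g) P := by
    by_contra h
    rw [condExp_of_not_integrable h] at h_na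
    obtain ⟨ω, hω⟩ := h_na.exists
    exact (mul_pos (inv_pos.2 (hb_pos ω)) (hq₀_pos ω)).ne hω
  filter_upwards [h_na, condExp_mul_of_stronglyMeasurable_left hG.stronglyMeasurable hGg hg,
    condExp_exp_neg_sum_mul_ae_eq h𝓖 hε_meas hε_law hε_indep hv_meas hv_bd]
    with ω h_mart h_pull h_gauss
  rw [h_pull, Pi.mul_apply, h_gauss, inv_mul_eq_div] at h_mart
  have hα : α ω = (∑ i, v ω i ^ 2) / 2 :=
    eq_of_mul_exp_neg_mul_exp_eq_self (div_pos (hq₀_pos ω) (hb_pos ω)).ne' h_mart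
  exact ⟨by rw [h_gauss, log_exp, hα], hα⟩

/-- Discrete-time HJM drift condition: if the one-period bond update
`Q = (q₀/p₀)·exp(−α − ⟨v, ε⟩)` with bank account `B = b/p₀` satisfies the
no-arbitrage martingale condition `E*[B⁻¹ Q | 𝓖] = b⁻¹ q₀` a.s., then a.s.
`α = log E*[exp(−⟨v, ε⟩) | 𝓖] = ‖v‖²/2`. -/
theorem consistent_yield_hjm_no_arbitrage_drift
    {Ω : Type*} {mΩ : MeasurableSpace Ω} (P : Measure Ω) [IsProbabilityMeasure P]
    (𝓖 : MeasurableSpace Ω) (h𝓖 : 𝓖 ≤ mΩ)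
    (d : ℕ) (hd : 1 ≤ d)
    (ε : Ω → (Fin d → ℝ)) (hε_meas : Measurable[mΩ] ε)
    (hε_law : @Measure.map Ω (Fin d → ℝ) mΩ _ ε P
      = Measure.pi (fun _ : Fin d => gaussianReal 0 1))
    (hε_indep : Indep (MeasurableSpace.comap ε inferInstance) 𝓖 P)
    (α : Ω → ℝ) (hα_meas : Measurable[𝓖] α)
    (v : Ω → (Fin d → ℝ)) (hv_meas : Measurable[𝓖] v)
    (Cv : ℝ) (hv_bd : ∀ ω i, |v ω i| ≤ Cv)
    (p₀ q₀ b : Ω → ℝ)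
    (hp₀_meas : Measurable[𝓖] p₀) (hq₀_meas : Measurable[𝓖] q₀) (hb_meas : Measurable[𝓖] b)
    (hp₀_pos : ∀ ω, 0 < p₀ ω) (hq₀_pos : ∀ ω, 0 < q₀ ω) (hb_pos : ∀ ω, 0 < b ω)
    (B Q : Ω → ℝ)
    (hB : ∀ ω, B ω = b ω / p₀ ω)
    (hQ : ∀ ω, Q ω = (q₀ ω / p₀ ω) * Real.exp (-(α ω) - ∑ i, v ω i * ε ω i))
    (h_na : (P[fun ω => (B ω)⁻¹ * Q ω | 𝓖]) =ᵐ[P] fun ω => (b ω)⁻¹ * q₀ ω) :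
    ∀ᵐ ω ∂P,
      α ω = Real.log ((P[fun ω' => Real.exp (-(∑ i, v ω' i * ε ω' i)) | 𝓖]) ω)
      ∧ α ω = (∑ i, (v ω i) ^ 2) / 2 :=
  consistent_yield_hjm_no_arbitrage_drift_general P 𝓖 h𝓖 d ε hε_meas hε_law hε_indep α hα_meas v
    hv_meas Cv hv_bd p₀ q₀ b hq₀_meas hb_meas hp₀_pos hq₀_pos hb_pos B Q hB hQ h_na
end

section
/- Let (Ω, 𝓕, P) be a probability space, 𝓖 ⊆ 𝓕 a sub-σ-algebra, and d ∈ ℕ with d ≥ 1. Let ε : Ω → ℝ^d be a standard Gaussian vector independent of 𝓖 under P, and let λ : Ω → ℝ^d be 𝓖-measurable and bounded. Define ξ := exp(−½‖λ‖² + ⟨λ, ε⟩) and the measure Q := ξ · P (i.e., Q has density ξ with respect to P). Then Q is a probability measure, and for every bounded measurable g : ℝ^d → ℝ one has, Q-almost surely, E_Q[g(ε − λ) | 𝓖] = ∫_{ℝ^d} g dγ_d, where γ_d is the d-fold product of the standard normal distribution. In particular, the distribution of ε − λ under Q, conditionally on 𝓖, is standard Gaussian. -/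
/-!
Freezing the `𝓖`-measurable `λ` at a value `l`, the density `ξ` becomes the Cameron–Martin
density `exp (⟨l, x⟩ - ‖l‖² / 2)` of `ε`, and tilting `γ_d` by it is a product of one-dimensional
tilts `N(0,1) ↦ N(l i, 1)`, i.e. a translation by `l`. Since `ε` is independent of `𝓖`, this gives
`(Q.restrict s).map (ε - λ) = P s • γ_d` for every `s ∈ 𝓖`: under `Q` the vector `ε - λ` is
independent of `𝓖` with law `γ_d`, so its conditional expectations are constants.
-/

open MeasureTheory ProbabilityTheory Real
open scoped ENNReal

theorem MeasureTheory.Measure.pi_withDensity {ι : Type*} [Fintype ι] {X : ι → Type*}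
    [∀ i, MeasurableSpace (X i)] {μ : ∀ i, Measure (X i)} [∀ i, IsProbabilityMeasure (μ i)]
    {f : ∀ i, X i → ℝ≥0∞} [∀ i, SigmaFinite ((μ i).withDensity (f i))]
    (hf : ∀ i, Measurable (f i)) :
    (Measure.pi μ).withDensity (fun x => ∏ i, f i (x i))
      = Measure.pi fun i => (μ i).withDensity (f i) := by
  refine (Measure.pi_eq fun s hs => ?_).symm
  have hind : (Set.univ.pi s).indicator (fun x => ∏ i, f i (x i))
      = fun x => ∏ i, (s i).indicator (f i) (x i) := by
    ext x
    by_cases hx : x ∈ Set.univ.pi s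
    · simp_all [Set.indicator_of_mem]
    · obtain ⟨i, hi⟩ : ∃ i, x i ∉ s i := by simpa [Set.mem_pi] using hx
      rw [Set.indicator_of_notMem hx, Finset.prod_eq_zero (Finset.mem_univ i)
        (Set.indicator_of_notMem hi _)]
  rw [withDensity_apply _ (.univ_pi hs), ← lintegral_indicator (.univ_pi hs), hind,
    lintegral_prod_eq_prod_lintegral_of_indepFun _ _
      (iIndepFun_pi fun i => ((hf i).indicator (hs i)).aemeasurable)
      fun i => ((hf i).indicator (hs i)).comp (measurable_pi_apply i)]
  refine Finset.prod_congr rfl fun i _ => ?_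
  rw [(measurePreserving_eval μ i).lintegral_comp ((hf i).indicator (hs i)),
    lintegral_indicator (hs i), withDensity_apply _ (hs i)]

theorem map_restrict_prod_eq_of_indep {Ω β E : Type*} {𝓖 mΩ : MeasurableSpace Ω}
    [MeasurableSpace β] [MeasurableSpace E] {P : Measure Ω} [IsFiniteMeasure P]
    (h𝓖 : 𝓖 ≤ mΩ) {X : Ω → β} {Y : Ω → E} (hX : Measurable[𝓖] X) (hY : Measurable Y)
    (hindep : Indep (MeasurableSpace.comap Y inferInstance) 𝓖 P)
    {s : Set Ω} (hs : MeasurableSet[𝓖] s) :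
    (P.restrict s).map (fun ω => (X ω, Y ω)) = ((P.restrict s).map X).prod (P.map Y) := by
  have hX' : Measurable X := hX.mono h𝓖 le_rfl
  refine (Measure.prod_eq fun A B hA hB => ?_).symm
  rw [Measure.map_apply (hX'.prodMk hY) (hA.prod hB), Measure.map_apply hX' hA,
    Measure.map_apply hY hB, Measure.restrict_apply (hX'.prodMk hY (hA.prod hB)),
    Measure.restrict_apply (hX' hA), Set.mk_preimage_prod, Set.inter_right_comm,
    Set.inter_comm, (Indep_iff _ _ P).1 hindep _ _ ⟨B, hB, rfl⟩ ((hX hA).inter hs), mul_comm]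

theorem indep_comap_of_forall_map_restrict_eq_smul {Ω E : Type*} {𝓖 mΩ : MeasurableSpace Ω}
    [MeasurableSpace E] {μ : Measure Ω} [IsProbabilityMeasure μ] {ν : Measure E} {Y : Ω → E}
    (hY : Measurable Y) (h : ∀ s, MeasurableSet[𝓖] s → (μ.restrict s).map Y = μ s • ν) :
    Indep (MeasurableSpace.comap Y inferInstance) 𝓖 μ := by
  rw [Indep_iff]
  rintro _ t ⟨A, hA, rfl⟩ ht
  have hYA := congr($(h Set.univ MeasurableSet.univ) A)
  have hYAt := congr($(h t ht) A)
  simp only [Measure.restrict_univ, measure_univ, one_smul, Measure.map_apply hY hA,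
    Measure.smul_apply, Measure.restrict_apply (hY hA), smul_eq_mul] at hYA hYAt
  rw [hYAt, hYA, mul_comm]

theorem gaussianReal_withDensity_exp (a : ℝ) :
    (gaussianReal 0 1).withDensity (fun t => ENNReal.ofReal (rexp (a * t - a ^ 2 / 2)))
      = gaussianReal a 1 := by
  rw [gaussianReal_of_var_ne_zero 0 one_ne_zero, gaussianReal_of_var_ne_zero a one_ne_zero,
    ← withDensity_mul _ (measurable_gaussianPDF 0 1) (by fun_prop)]
  congr 1
  funext x
  rw [Pi.mul_apply, gaussianPDF, gaussianPDF, ← ENNReal.ofReal_mul (gaussianPDFReal_nonneg 0 1 x),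
    gaussianPDFReal, gaussianPDFReal, mul_assoc, ← Real.exp_add, NNReal.coe_one]
  congr 3
  ring

noncomputable def cameronMartinDensity {ι : Type*} [Fintype ι] (l x : ι → ℝ) : ℝ :=
  rexp (-(∑ i, l i ^ 2) / 2 + ∑ i, l i * x i)

theorem measurable_cameronMartinDensity {ι : Type*} [Fintype ι] :
    Measurable (Function.uncurry (cameronMartinDensity (ι := ι))) := by
  unfold Function.uncurry cameronMartinDensity
  fun_prop

theorem cameronMartinDensity_eq_prod {ι : Type*} [Fintype ι] (l x : ι → ℝ) :
    cameronMartinDensity l x = ∏ i, rexp (l i * x i - l i ^ 2 / 2) := by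
  rw [cameronMartinDensity, ← Real.exp_sum, Finset.sum_sub_distrib, ← Finset.sum_div]
  ring_nf

theorem pi_gaussianReal_withDensity_cameronMartinDensity {ι : Type*} [Fintype ι] (l : ι → ℝ) :
    (Measure.pi fun _ : ι => gaussianReal 0 1).withDensity
        (fun x => ENNReal.ofReal (cameronMartinDensity l x))
      = (Measure.pi fun _ : ι => gaussianReal 0 1).map (· + l) := by
  simp_rw [cameronMartinDensity_eq_prod,
    ENNReal.ofReal_prod_of_nonneg fun i _ => (Real.exp_pos _).le]
  rw [Measure.pi_withDensity (f := fun i t => ENNReal.ofReal (rexp (l i * t - l i ^ 2 / 2)))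
    fun i => by fun_prop]
  simp_rw [gaussianReal_withDensity_exp]
  rw [show (· + l) = fun (x : ι → ℝ) i => x i + l i from rfl,
    Measure.pi_map_pi fun i => (measurable_add_const (l i)).aemeasurable]
  simp_rw [gaussianReal_map_add_const, zero_add]

theorem lintegral_cameronMartinDensity_mul_comp_sub {ι : Type*} [Fintype ι] (l : ι → ℝ)
    {h : (ι → ℝ) → ℝ≥0∞} (hh : Measurable h) :
    ∫⁻ x, ENNReal.ofReal (cameronMartinDensity l x) * h (x - l)
        ∂(Measure.pi fun _ : ι => gaussianReal 0 1)
      = ∫⁻ x, h x ∂(Measure.pi fun _ : ι => gaussianReal 0 1) := by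
  have hρ : Measurable fun x => ENNReal.ofReal (cameronMartinDensity l x) := by
    unfold cameronMartinDensity; fun_prop
  have hh' : Measurable fun x => h (x - l) := hh.comp (measurable_sub_const l)
  calc _ = ∫⁻ x, h (x - l) ∂(Measure.pi fun _ : ι => gaussianReal 0 1).withDensity
          (fun x => ENNReal.ofReal (cameronMartinDensity l x)) :=
        (lintegral_withDensity_eq_lintegral_mul _ hρ hh').symm
    _ = _ := by
      rw [pi_gaussianReal_withDensity_cameronMartinDensity,
        lintegral_map hh' (measurable_add_const l)]
      simp

section Girsanov

variable {ι Ω : Type*} [Fintype ι] {𝓖 mΩ : MeasurableSpace Ω} {P : Measure Ω}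
  [IsFiniteMeasure P] {ε lam : Ω → ι → ℝ}

theorem setLIntegral_cameronMartinDensity_mul_comp_sub (h𝓖 : 𝓖 ≤ mΩ) (hε : Measurable ε)
    (hε_law : P.map ε = Measure.pi fun _ : ι => gaussianReal 0 1)
    (hindep : Indep (MeasurableSpace.comap ε inferInstance) 𝓖 P) (hlam : Measurable[𝓖] lam)
    {s : Set Ω} (hs : MeasurableSet[𝓖] s) {h : (ι → ℝ) → ℝ≥0∞} (hh : Measurable h) :
    ∫⁻ ω in s, ENNReal.ofReal (cameronMartinDensity (lam ω) (ε ω)) * h (ε ω - lam ω) ∂P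
      = P s * ∫⁻ x, h x ∂(Measure.pi fun _ : ι => gaussianReal 0 1) := by
  have hF : Measurable fun p : (ι → ℝ) × (ι → ℝ) =>
      ENNReal.ofReal (cameronMartinDensity p.1 p.2) * h (p.2 - p.1) :=
    measurable_cameronMartinDensity.ennreal_ofReal.mul (hh.comp (measurable_snd.sub measurable_fst))
  have hpair : Measurable fun ω => (lam ω, ε ω) := (hlam.mono h𝓖 le_rfl).prodMk hε
  rw [← lintegral_map hF hpair, map_restrict_prod_eq_of_indep h𝓖 hlam hε hindep hs, hε_law,
    lintegral_prod _ hF.aemeasurable]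
  simp_rw [lintegral_cameronMartinDensity_mul_comp_sub _ hh]
  rw [lintegral_const, Measure.map_apply (hlam.mono h𝓖 le_rfl) MeasurableSet.univ,
    Set.preimage_univ, Measure.restrict_apply_univ, mul_comm]

theorem map_restrict_withDensity_cameronMartinDensity (h𝓖 : 𝓖 ≤ mΩ) (hε : Measurable ε)
    (hε_law : P.map ε = Measure.pi fun _ : ι => gaussianReal 0 1)
    (hindep : Indep (MeasurableSpace.comap ε inferInstance) 𝓖 P) (hlam : Measurable[𝓖] lam)
    {s : Set Ω} (hs : MeasurableSet[𝓖] s) :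
    ((P.withDensity fun ω => ENNReal.ofReal (cameronMartinDensity (lam ω) (ε ω))).restrict s).map
        (fun ω => ε ω - lam ω)
      = P s • Measure.pi fun _ : ι => gaussianReal 0 1 := by
  have hlam' : Measurable lam := hlam.mono h𝓖 le_rfl
  have hsub : Measurable fun ω => ε ω - lam ω := hε.sub hlam'
  have hξ : Measurable fun ω => ENNReal.ofReal (cameronMartinDensity (lam ω) (ε ω)) :=
    (measurable_cameronMartinDensity.comp (hlam'.prodMk hε)).ennreal_ofReal
  refine Measure.ext_of_lintegral _ fun h hh => ?_
  rw [lintegral_map hh hsub, restrict_withDensity (h𝓖 s hs),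
    lintegral_withDensity_eq_lintegral_mul _ hξ (g := fun ω => h (ε ω - lam ω)) (hh.comp hsub),
    lintegral_smul_measure]
  exact setLIntegral_cameronMartinDensity_mul_comp_sub h𝓖 hε hε_law hindep hlam hs hh

end Girsanov

theorem consistent_yield_girsanov_one_period_general
    {Ω : Type*} {mΩ : MeasurableSpace Ω} (P : Measure Ω) [IsProbabilityMeasure P]
    (𝓖 : MeasurableSpace Ω) (h𝓖 : 𝓖 ≤ mΩ)
    (d : ℕ)
    (ε : Ω → (Fin d → ℝ)) (hε_meas : Measurable[mΩ] ε)
    (hε_law : @Measure.map Ω (Fin d → ℝ) mΩ _ ε P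
      = Measure.pi (fun _ : Fin d => gaussianReal 0 1))
    (hε_indep : Indep (MeasurableSpace.comap ε inferInstance) 𝓖 P)
    (lam : Ω → (Fin d → ℝ)) (hlam_meas : Measurable[𝓖] lam)
    (ξ : Ω → ℝ)
    (hξ : ∀ ω, ξ ω = Real.exp (-(∑ i, (lam ω i) ^ 2) / 2 + ∑ i, lam ω i * ε ω i))
    (Q : @Measure Ω mΩ)
    (hQ : Q = P.withDensity fun ω => ENNReal.ofReal (ξ ω)) :
    IsProbabilityMeasure Q
    ∧ ∀ g : (Fin d → ℝ) → ℝ, Measurable g → ∀ Cg : ℝ, (∀ x, |g x| ≤ Cg) →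
      (Q[fun ω => g (ε ω - lam ω) | 𝓖])
        =ᵐ[Q] fun _ => ∫ x, g x ∂(Measure.pi fun _ : Fin d => gaussianReal 0 1) := by
  -- `𝓖` is the last `MeasurableSpace Ω` in context; make `mΩ` the ambient instance instead.
  let _ := mΩ
  obtain rfl : ξ = fun ω => cameronMartinDensity (lam ω) (ε ω) := funext hξ
  have hY : Measurable fun ω => ε ω - lam ω := hε_meas.sub (hlam_meas.mono h𝓖 le_rfl)
  have hmap : ∀ s, MeasurableSet[𝓖] s → (Q.restrict s).map (fun ω => ε ω - lam ω)
      = P s • Measure.pi fun _ : Fin d => gaussianReal 0 1 := fun s hs => hQ ▸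
    map_restrict_withDensity_cameronMartinDensity h𝓖 hε_meas hε_law hε_indep hlam_meas hs
  have hQs : ∀ s, MeasurableSet[𝓖] s → Q s = P s := fun s hs => by
    simpa [Measure.map_apply hY MeasurableSet.univ] using congr($(hmap s hs) Set.univ)
  have hlaw : Q.map (fun ω => ε ω - lam ω) = Measure.pi fun _ : Fin d => gaussianReal 0 1 := by
    simpa using hmap _ MeasurableSet.univ
  have hQ_prob : IsProbabilityMeasure Q := ⟨by simpa using hQs _ MeasurableSet.univ⟩
  refine ⟨hQ_prob, fun g hg _ _ => ?_⟩
  have hindep : Indep (MeasurableSpace.comap (fun ω => ε ω - lam ω) inferInstance) 𝓖 Q :=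
    indep_comap_of_forall_map_restrict_eq_smul hY fun s hs => by rw [hmap s hs, hQs s hs]
  filter_upwards [condExp_indep_eq (f := fun ω => g (ε ω - lam ω)) hY.comap_le h𝓖
    (hg.comp (comap_measurable _)).stronglyMeasurable hindep] with ω hω
  rw [hω, ← hlaw, integral_map hY.aemeasurable hg.aestronglyMeasurable]

/-- Discrete one-period Girsanov: if `ε` is a standard Gaussian vector independent of `𝓖`
under `P` and `λ` is `𝓖`-measurable and bounded, then for the tilted measure
`Q = exp(−½‖λ‖² + ⟨λ, ε⟩) · P`, `Q` is a probability measure and, conditionally on `𝓖`,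
the vector `ε − λ` is standard Gaussian under `Q`: for every bounded measurable `g`,
`E_Q[g(ε − λ) | 𝓖] = ∫ g dγ_d` holds `Q`-a.s. -/
theorem consistent_yield_girsanov_one_period
    {Ω : Type*} {mΩ : MeasurableSpace Ω} (P : Measure Ω) [IsProbabilityMeasure P]
    (𝓖 : MeasurableSpace Ω) (h𝓖 : 𝓖 ≤ mΩ)
    (d : ℕ) (hd : 1 ≤ d)
    (ε : Ω → (Fin d → ℝ)) (hε_meas : Measurable[mΩ] ε)
    (hε_law : @Measure.map Ω (Fin d → ℝ) mΩ _ ε P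
      = Measure.pi (fun _ : Fin d => gaussianReal 0 1))
    (hε_indep : Indep (MeasurableSpace.comap ε inferInstance) 𝓖 P)
    (lam : Ω → (Fin d → ℝ)) (hlam_meas : Measurable[𝓖] lam)
    (Clam : ℝ) (hlam_bd : ∀ ω i, |lam ω i| ≤ Clam)
    (ξ : Ω → ℝ)
    (hξ : ∀ ω, ξ ω = Real.exp (-(∑ i, (lam ω i) ^ 2) / 2 + ∑ i, lam ω i * ε ω i))
    (Q : @Measure Ω mΩ)
    (hQ : Q = P.withDensity fun ω => ENNReal.ofReal (ξ ω)) :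
    IsProbabilityMeasure Q
    ∧ ∀ g : (Fin d → ℝ) → ℝ, Measurable g → ∀ Cg : ℝ, (∀ x, |g x| ≤ Cg) →
      (Q[fun ω => g (ε ω - lam ω) | 𝓖])
        =ᵐ[Q] fun _ => ∫ x, g x ∂(Measure.pi fun _ : Fin d => gaussianReal 0 1) :=
  consistent_yield_girsanov_one_period_general P 𝓖 h𝓖 d ε hε_meas hε_law hε_indep lam hlam_meas ξ hξ
    Q hQ
end
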